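/- Let a, b ∈ ℝⁿ with ‖a‖ ≠ 1, ‖b‖ ≠ 1 and a ≠ b, and let T = τ_b ∘ τ_a : S^{n-1} → S^{n-1}. Then for x ∈ S^{n-1}, T(x) = x if and only if either ⟨x,a⟩ = 1 and ⟨x,b⟩ = 1, or x lies on the affine line L_{a,b} through a and b. Equivalently, the fixed point set of T is Z_{a,b} ∪ (L_{a,b} ∩ S^{n-1}), where Z_{a,b} = {x ∈ S^{n-1} : ⟨x,a⟩ = ⟨x,b⟩ = 1}. -/

import Mathlib

open Metric

noncomputable section

/-- The `a`-symmetry of the unit sphere. -/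
def tau {n : ℕ} (a x : EuclideanSpace ℝ (Fin n)) : EuclideanSpace ℝ (Fin n) :=
  x + (2 * (1 - (inner ℝ x a : ℝ)) / ‖a - x‖ ^ 2) • (a - x)

/-! Write `τ_a x = x + s • (a - x)`. For `‖x‖ = 1` we have
`‖x + r • (a - x)‖² = 1 + r (2⟪x, a - x⟫ + r ‖a - x‖²)`, and `s` is its nonzero root:
`s ‖a - x‖² = -2⟪x, a - x⟫`. From this relation alone, `τ_a` preserves the sphere, its coefficient
at `τ_a x` is `-s / (1 - s)` (so `τ_a` is an involution), and it depends only on the line through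
`x` and `a`. Hence `τ_b (τ_a x) = x` iff `τ_a x = τ_b x`, i.e. iff `s_a • (a - x) = s_b • (b - x)`:
either both sides vanish, which means `⟪x, a⟫ = ⟪x, b⟫ = 1`, or `x`, `a`, `b` are collinear. -/

open scoped RealInnerProductSpace

section LineAlgebra

variable {K V : Type*} [Field K] [AddCommGroup V] [Module K V] {a b x : V}

lemma exists_eq_add_smul_sub_of_smul_sub_eq {p q : K} (hab : a ≠ b) (hp : p ≠ 0)
    (h : p • (a - x) = q • (b - x)) : ∃ t : K, x = a + t • (b - a) := by
  have hpq : p - q ≠ 0 := by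
    rintro hpq
    rw [← sub_eq_zero.mp hpq] at h
    exact hab (sub_left_inj.mp (smul_right_injective V hp h))
  refine ⟨-q / (p - q), ?_⟩
  have hx : (p - q) • x = p • a - q • b := by
    linear_combination (norm := module) -h
  calc x = (p - q)⁻¹ • ((p - q) • x) := by rw [smul_smul, inv_mul_cancel₀ hpq, one_smul]
    _ = a + (-q / (p - q)) • (b - a) := by
      rw [hx]
      match_scalars <;> field_simp; ring

lemma sub_eq_smul_sub_of_eq_add_smul_sub {t : K} (ht : t ≠ 0) (hx : x = a + t • (b - a)) :
    b - x = ((t - 1) / t) • (a - x) := by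
  rw [hx]
  match_scalars <;> field_simp <;> ring

end LineAlgebra

variable {n : ℕ} {a b x : EuclideanSpace ℝ (Fin n)}

def tauCoeff (a x : EuclideanSpace ℝ (Fin n)) : ℝ :=
  2 * (1 - ⟪x, a⟫) / ‖a - x‖ ^ 2

lemma tau_eq_add_tauCoeff_smul (a x : EuclideanSpace ℝ (Fin n)) :
    tau a x = x + tauCoeff a x • (a - x) :=
  rfl

lemma sub_ne_zero_of_norm_eq_one (hx : ‖x‖ = 1) (ha : ‖a‖ ≠ 1) : a - x ≠ 0 :=
  fun h => ha (sub_eq_zero.mp h ▸ hx)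

lemma tauCoeff_mul_norm_sq (hx : ‖x‖ = 1) (hax : a - x ≠ 0) :
    tauCoeff a x * ‖a - x‖ ^ 2 = -2 * ⟪x, a - x⟫ := by
  rw [tauCoeff, div_mul_cancel₀ _ (by positivity), inner_sub_right, real_inner_self_eq_norm_sq, hx]
  ring

lemma tauCoeff_eq_zero_iff (hax : a - x ≠ 0) : tauCoeff a x = 0 ↔ ⟪x, a⟫ = 1 := by
  rw [tauCoeff, div_eq_zero_iff, or_iff_left (by positivity), mul_eq_zero, sub_eq_zero]
  norm_num [eq_comm]

lemma norm_tau (hx : ‖x‖ = 1) (ha : ‖a‖ ≠ 1) : ‖tau a x‖ = 1 := by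
  have hax := sub_ne_zero_of_norm_eq_one hx ha
  have key : ‖tau a x‖ ^ 2 = 1 := by
    rw [tau_eq_add_tauCoeff_smul, norm_add_sq_real, real_inner_smul_right, norm_smul, mul_pow,
      Real.norm_eq_abs, sq_abs, hx]
    linear_combination tauCoeff a x * tauCoeff_mul_norm_sq hx hax
  exact (pow_eq_one_iff_of_nonneg (norm_nonneg _) two_ne_zero).mp key

lemma tauCoeff_ne_one (hx : ‖x‖ = 1) (ha : ‖a‖ ≠ 1) : tauCoeff a x ≠ 1 := by
  intro h
  apply ha
  rw [← norm_tau hx ha, tau_eq_add_tauCoeff_smul, h, one_smul, add_sub_cancel]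

lemma inner_tau_sub (hx : ‖x‖ = 1) (ha : ‖a‖ ≠ 1) : ⟪tau a x, a - x⟫ = -⟪x, a - x⟫ := by
  rw [tau_eq_add_tauCoeff_smul, inner_add_left, real_inner_smul_left, real_inner_self_eq_norm_sq]
  linear_combination tauCoeff_mul_norm_sq hx (sub_ne_zero_of_norm_eq_one hx ha)

lemma tau_tau (hx : ‖x‖ = 1) (ha : ‖a‖ ≠ 1) : tau a (tau a x) = x := by
  set s := tauCoeff a x
  have hax := sub_ne_zero_of_norm_eq_one hx ha
  have hs : 1 - s ≠ 0 := sub_ne_zero.mpr (tauCoeff_ne_one hx ha).symm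
  have hay : a - tau a x = (1 - s) • (a - x) := by
    rw [tau_eq_add_tauCoeff_smul]
    module
  have hcoeff : tauCoeff a (tau a x) * (1 - s) = -s := by
    have hy := tauCoeff_mul_norm_sq (norm_tau hx ha) (sub_ne_zero_of_norm_eq_one (norm_tau hx ha) ha)
    rw [hay, norm_smul, mul_pow, Real.norm_eq_abs, sq_abs, real_inner_smul_right,
      inner_tau_sub hx ha] at hy
    apply mul_left_cancel₀ (mul_ne_zero hs (by positivity : ‖a - x‖ ^ 2 ≠ 0))
    linear_combination hy + (1 - s) * tauCoeff_mul_norm_sq hx hax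
  rw [tau_eq_add_tauCoeff_smul a (tau a x), hay, smul_smul, hcoeff, tau_eq_add_tauCoeff_smul]
  module

lemma tau_eq_self_iff (hx : ‖x‖ = 1) (ha : ‖a‖ ≠ 1) : tau a x = x ↔ ⟪x, a⟫ = 1 := by
  have hax := sub_ne_zero_of_norm_eq_one hx ha
  rw [tau_eq_add_tauCoeff_smul, add_eq_left, smul_eq_zero, or_iff_left hax,
    tauCoeff_eq_zero_iff hax]

lemma tau_eq_of_sub_eq_smul_sub (hx : ‖x‖ = 1) (ha : ‖a‖ ≠ 1) {c : ℝ} (hc : c ≠ 0)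
    (hbx : b - x = c • (a - x)) : tau b x = tau a x := by
  have hax := sub_ne_zero_of_norm_eq_one hx ha
  have hcoeff : tauCoeff b x * c = tauCoeff a x := by
    have hb := tauCoeff_mul_norm_sq hx (hbx ▸ smul_ne_zero hc hax)
    rw [hbx, norm_smul, mul_pow, Real.norm_eq_abs, sq_abs, real_inner_smul_right] at hb
    apply mul_right_cancel₀ (mul_ne_zero hc (by positivity : ‖a - x‖ ^ 2 ≠ 0))
    linear_combination hb - c * tauCoeff_mul_norm_sq hx hax
  rw [tau_eq_add_tauCoeff_smul, tau_eq_add_tauCoeff_smul, hbx, smul_smul, hcoeff]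

lemma tau_tau_eq_self_iff (hx : ‖x‖ = 1) (ha : ‖a‖ ≠ 1) (hb : ‖b‖ ≠ 1) :
    tau b (tau a x) = x ↔ tau a x = tau b x :=
  ⟨fun h => by rw [← tau_tau (norm_tau hx ha) hb, h], fun h => by rw [h, tau_tau hx hb]⟩

theorem fixed_points_of_T_general
    {n : ℕ} (a b : EuclideanSpace ℝ (Fin n))
    (ha : ‖a‖ ≠ 1) (hb : ‖b‖ ≠ 1) (hab : a ≠ b) :
    ∀ x ∈ sphere (0 : EuclideanSpace ℝ (Fin n)) 1,
      (tau b (tau a x) = x ↔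
        ((inner ℝ x a : ℝ) = 1 ∧ (inner ℝ x b : ℝ) = 1) ∨
          (∃ t : ℝ, x = a + t • (b - a))) := by
  intro x hx
  rw [mem_sphere_zero_iff_norm] at hx
  rw [tau_tau_eq_self_iff hx ha hb]
  constructor
  · intro h
    by_cases hxa : ⟪x, a⟫ = 1
    · refine .inl ⟨hxa, (tau_eq_self_iff hx hb).mp ?_⟩
      rw [← h, (tau_eq_self_iff hx ha).mpr hxa]
    · have hs : tauCoeff a x ≠ 0 :=
        fun h0 => hxa ((tauCoeff_eq_zero_iff (sub_ne_zero_of_norm_eq_one hx ha)).mp h0)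
      rw [tau_eq_add_tauCoeff_smul, tau_eq_add_tauCoeff_smul, add_right_inj] at h
      exact .inr (exists_eq_add_smul_sub_of_smul_sub_eq hab hs h)
  · rintro (⟨hxa, hxb⟩ | ⟨t, hxt⟩)
    · rw [(tau_eq_self_iff hx ha).mpr hxa, (tau_eq_self_iff hx hb).mpr hxb]
    · have ht0 : t ≠ 0 := by
        rintro rfl
        exact ha (by simpa [hxt] using hx)
      have ht1 : t ≠ 1 := by
        rintro rfl
        exact hb (by simpa [hxt] using hx)
      refine (tau_eq_of_sub_eq_smul_sub hx ha ?_ (sub_eq_smul_sub_of_eq_add_smul_sub ht0 hxt)).symm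
      exact div_ne_zero (sub_ne_zero.mpr ht1) ht0

theorem fixed_points_of_T
    {n : ℕ} (hn : 2 ≤ n) (a b : EuclideanSpace ℝ (Fin n))
    (ha : ‖a‖ ≠ 1) (hb : ‖b‖ ≠ 1) (hab : a ≠ b) :
    ∀ x ∈ sphere (0 : EuclideanSpace ℝ (Fin n)) 1,
      (tau b (tau a x) = x ↔
        ((inner ℝ x a : ℝ) = 1 ∧ (inner ℝ x b : ℝ) = 1) ∨
          (∃ t : ℝ, x = a + t • (b - a))) :=
  fixed_points_of_T_general a b ha hb hab
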